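/- arXiv:1310.3236 — 8 statements merged into one kernel-verified Lean document; each statement's English description precedes it below -/
import Mathlib

section
/- Let G be a finite abelian group of even order 2n. Then the maximum size of a sum-free subset of G is n, and this is achieved by the nontrivial coset of any subgroup of index 2. -/
open Function

lemma zmod2_eq_zero_or_one : ∀ c : ZMod 2, c = 0 ∨ c = 1 := by decide

/-- A finite abelian group of even order has a subgroup of index 2. -/
lemma exists_index_two {G : Type*} [AddCommGroup G] [Fintype G]
    (h2 : 2 ∣ Fintype.card G) : ∃ H : AddSubgroup G, H.index = 2 := by
  classical
  obtain ⟨a, ha⟩ := exists_prime_addOrderOf_dvd_card (G := G) 2 h2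
  have hane : a ≠ 0 := by
    intro h
    rw [h, addOrderOf_zero] at ha
    exact absurd ha (by norm_num)
  have haa : a + a = 0 := by
    have := addOrderOf_nsmul_eq_zero a
    rwa [ha, two_nsmul] at this
  let D : G →+ G := AddMonoidHom.mk' (fun x => x + x) (by intro x y; abel_nf)
  have hH : ∀ x : G, 2 • x ∈ D.range := fun x => ⟨x, by simp [D, two_nsmul]⟩
  letI : Module (ZMod 2) (G ⧸ D.range) := QuotientAddGroup.zmodModule hH
  haveI : Fact (Nat.Prime 2) := ⟨Nat.prime_two⟩
  -- the doubling map is not surjective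
  have hnsurj : ¬ Surjective D := by
    intro hsurj
    have hinj : Injective D := Finite.injective_iff_surjective.mpr hsurj
    exact hane (hinj (show D a = D 0 by simp [D, haa]))
  obtain ⟨x, hx⟩ : ∃ x : G, x ∉ D.range := by
    by_contra h
    push_neg at h
    exact hnsurj fun y => (h y).imp fun z hz => hz
  have hq : (QuotientAddGroup.mk x : G ⧸ D.range) ≠ 0 := by
    rwa [Ne, QuotientAddGroup.eq_zero_iff]
  obtain ⟨φ, hφ⟩ : ∃ φ : Module.Dual (ZMod 2) (G ⧸ D.range),
      φ (QuotientAddGroup.mk x) ≠ 0 := by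
    by_contra h
    push_neg at h
    exact hq ((Module.forall_dual_apply_eq_zero_iff (ZMod 2) _).mp h)
  let f : G →+ ZMod 2 := φ.toAddMonoidHom.comp (QuotientAddGroup.mk' D.range)
  have hfx : f x ≠ 0 := hφ
  have hfx1 : f x = 1 := by
    rcases zmod2_eq_zero_or_one (f x) with h | h
    · exact absurd h hfx
    · exact h
  have hfsurj : Surjective f := by
    intro c
    rcases zmod2_eq_zero_or_one c with rfl | rfl
    · exact ⟨0, map_zero f⟩
    · exact ⟨x, hfx1⟩
  refine ⟨f.ker, ?_⟩
  rw [AddSubgroup.index_ker, AddMonoidHom.range_eq_top.mpr hfsurj,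
    AddSubgroup.card_top, Nat.card_zmod]

/-- The complement of an index 2 subgroup is sum-free. -/
lemma compl_sumFree {G : Type*} [AddCommGroup G] [Fintype G]
    (H : AddSubgroup G) (hH : H.index = 2) :
    ∀ x ∈ ((H : Set G)ᶜ), ∀ y ∈ ((H : Set G)ᶜ), x + y ∉ ((H : Set G)ᶜ) := by
  classical
  intro x hx y hy hxy
  simp only [Set.mem_compl_iff, SetLike.mem_coe] at hx hy hxy
  have hcard : Nat.card (G ⧸ H) = 2 := hH
  haveI : Fintype (G ⧸ H) := Fintype.ofFinite _
  have hcard' : Fintype.card (G ⧸ H) = 2 := by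
    rw [← Nat.card_eq_fintype_card]; exact hcard
  set qx : G ⧸ H := QuotientAddGroup.mk x with hqx
  set qy : G ⧸ H := QuotientAddGroup.mk y with hqy
  have h1 : qx ≠ 0 := by rwa [hqx, Ne, QuotientAddGroup.eq_zero_iff]
  have h2 : qy ≠ 0 := by rwa [hqy, Ne, QuotientAddGroup.eq_zero_iff]
  have h3 : qx + qy ≠ 0 := by
    rw [hqx, hqy, Ne, ← QuotientAddGroup.mk_add, QuotientAddGroup.eq_zero_iff]
    exact hxy
  have h4 : qx + qy ≠ qx := by
    intro h
    exact h2 (by rwa [add_eq_left] at h)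
  have : ({0, qx, qx + qy} : Finset (G ⧸ H)).card = 3 := by
    rw [Finset.card_insert_of_notMem (by simp [h1.symm, h3.symm]),
      Finset.card_insert_of_notMem (by simp [h4.symm]), Finset.card_singleton]
  have hle := Finset.card_le_univ ({0, qx, qx + qy} : Finset (G ⧸ H))
  rw [this] at hle
  rw [hcard'] at hle
  omega

/-- Let `G` be a finite abelian group of even order `2n`. Then the maximum
size of a sum-free subset of `G` is `n`, and this maximum is achieved by the nontrivial
coset of any subgroup of index 2. -/
theorem stmt0 {G : Type*} [AddCommGroup G] [Fintype G] {n : ℕ}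
    (hn : Fintype.card G = 2 * n) :
    IsGreatest {m : ℕ | ∃ A : Set G, (∀ x ∈ A, ∀ y ∈ A, x + y ∉ A) ∧ A.ncard = m} n ∧
    ∀ H : AddSubgroup G, H.index = 2 →
      (∀ x ∈ ((H : Set G)ᶜ), ∀ y ∈ ((H : Set G)ᶜ), x + y ∉ ((H : Set G)ᶜ)) ∧
      ((H : Set G)ᶜ).ncard = n := by
  classical
  have hcompl : ∀ H : AddSubgroup G, H.index = 2 →
      (∀ x ∈ ((H : Set G)ᶜ), ∀ y ∈ ((H : Set G)ᶜ), x + y ∉ ((H : Set G)ᶜ)) ∧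
      ((H : Set G)ᶜ).ncard = n := by
    intro H hH
    refine ⟨compl_sumFree H hH, ?_⟩
    have hG : Nat.card G = 2 * n := by rw [Nat.card_eq_fintype_card, hn]
    have hmul : Nat.card H * H.index = Nat.card G := AddSubgroup.card_mul_index H
    rw [hH, hG] at hmul
    have hHn : Nat.card H = n := by omega
    have hHset : (H : Set G).ncard = n := by
      rw [← Nat.card_coe_set_eq]; exact hHn
    have hsum : ((H : Set G)).ncard + ((H : Set G)ᶜ).ncard = Nat.card G :=
      Set.ncard_add_ncard_compl _
    rw [hG, hHset] at hsum
    omega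
  refine ⟨⟨?_, ?_⟩, hcompl⟩
  · -- n is attained
    obtain ⟨H, hH⟩ := exists_index_two (G := G) ⟨n, hn⟩
    exact ⟨(H : Set G)ᶜ, (hcompl H hH).1, (hcompl H hH).2⟩
  · -- n is an upper bound
    rintro m ⟨A, hA, rfl⟩
    rcases A.eq_empty_or_nonempty with rfl | ⟨a, haA⟩
    · simp
    · have hdisj : Disjoint A ((a + ·) '' A) := by
        rw [Set.disjoint_right]
        rintro y ⟨z, hz, rfl⟩ hyA
        exact hA a haA z hz hyA
      have h1 : ((a + ·) '' A).ncard = A.ncard :=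
        Set.ncard_image_of_injective _ (add_right_injective a)
      have h2 : (A ∪ (a + ·) '' A).ncard = A.ncard + ((a + ·) '' A).ncard :=
        Set.ncard_union_eq hdisj (Set.toFinite _) (Set.toFinite _)
      have h3 : (A ∪ (a + ·) '' A).ncard ≤ (Set.univ : Set G).ncard :=
        Set.ncard_le_ncard (Set.subset_univ _) (Set.toFinite _)
      rw [Set.ncard_univ, Nat.card_eq_fintype_card, hn] at h3
      omega
end

section
/- Let G = Z_{2^{a_1}} ⊕ ... ⊕ Z_{2^{a_k}} ⊕ J with 1 ≤ a_1 ≤ ... ≤ a_k, |J| odd, and let I ⊆ {1,...,k} be nonempty with i = min I. Then the subgroup H_I = { x ∈ G : Σ_{i∈I} x_i ≡ 0 (mod 2) } is isomorphic to Z_{2^{a_1}} ⊕ ... ⊕ Z_{2^{a_i - 1}} ⊕ ... ⊕ Z_{2^{a_k}} ⊕ J (i.e., the i-th cyclic factor has its order halved). -/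
/-!
Split off the `i`-th cyclic factor, `G ≅ Z_{2^{a_i}} × B`. In these coordinates the parity map
reads `(x, y) ↦ x + Σ_{j ∈ I, j ≠ i} y_j (mod 2)`; since `a_i ≤ a_j` for `j ∈ I`, that sum lifts
to a homomorphism `t : B → Z_{2^{a_i}}`, so the parity map is `r (x + t y)` with `r` the reduction
mod 2. The shear `(x, y) ↦ (x + t y, y)` then carries `H_I` onto `ker r × B`, and `ker r` is
cyclic of order `2^{a_i - 1}`.
-/

/-- The subgroup `H_I = { (x, y) : Σ_{i ∈ I} x_i ≡ 0 (mod 2) }` of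
`(Π i, Z_{2^{a i}}) × J`, defined as the kernel of the homomorphism
`(x, y) ↦ Σ_{i ∈ I} (x_i mod 2)`. -/
def Hsub {k : ℕ} (a : Fin k → ℕ) (ha : ∀ i, a i ≠ 0) (J : Type*) [AddCommGroup J]
    (I : Finset (Fin k)) : AddSubgroup ((∀ i : Fin k, ZMod (2 ^ a i)) × J) :=
  AddMonoidHom.ker (∑ i ∈ I,
    ((ZMod.castHom (dvd_pow_self 2 (ha i)) (ZMod 2)).toAddMonoidHom.comp
      ((Pi.evalAddMonoidHom (fun j => ZMod (2 ^ a j)) i).comp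
        (AddMonoidHom.fst (∀ j : Fin k, ZMod (2 ^ a j)) J))))

noncomputable def ZMod.kerCastHomEquiv {d n : ℕ} [NeZero n] (h : d ∣ n) :
    (ZMod.castHom h (ZMod d)).toAddMonoidHom.ker ≃+ ZMod (n / d) := by
  set f := (ZMod.castHom h (ZMod d)).toAddMonoidHom
  have hd : d ≠ 0 := by rintro rfl; exact NeZero.ne n (zero_dvd_iff.mp h)
  have hindex : f.ker.index = d := by
    rw [AddSubgroup.index_ker, AddMonoidHom.range_eq_top.mpr (ZMod.castHom_surjective h),
      Nat.card_congr AddSubgroup.topEquiv.toEquiv, Nat.card_zmod]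
  have hcard : Nat.card f.ker = n / d := by
    have := f.ker.card_mul_index
    rw [hindex, Nat.card_zmod] at this
    exact Nat.eq_div_of_mul_eq_left hd this
  exact (zmodAddCyclicAddEquiv inferInstance).symm.trans (ZMod.ringEquivCongr hcard).toAddEquiv

namespace AddEquiv

variable {ι : Type*} [DecidableEq ι] (i : ι) (β : ι → Type*) [∀ j, AddZeroClass (β j)]
  (J : Type*) [AddZeroClass J]

def piSplitAt : (∀ j, β j) ≃+ β i × ∀ j : { j // j ≠ i }, β j :=
  mk' (Equiv.piSplitAt i β) fun _ _ => rfl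

def piProdSplitAt : (∀ j, β j) × J ≃+ β i × ((∀ j : { j // j ≠ i }, β j) × J) :=
  ((piSplitAt i β).prodCongr (refl J)).trans prodAssoc

variable {i β J}

@[simp]
theorem piProdSplitAt_symm_apply_self (x : β i) (y : (∀ j : { j // j ≠ i }, β j) × J) :
    ((piProdSplitAt i β J).symm (x, y)).1 i = x :=
  dif_pos rfl

@[simp]
theorem piProdSplitAt_symm_apply_ne (x : β i) (y : (∀ j : { j // j ≠ i }, β j) × J)
    (j : { j // j ≠ i }) : ((piProdSplitAt i β J).symm (x, y)).1 j = y.1 j :=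
  dif_neg j.2

end AddEquiv

def AddMonoidHom.kerEquivOfShear {G A B M : Type*} [AddCommGroup G] [AddCommGroup A]
    [AddCommGroup B] [AddCommGroup M] (φ : G →+ M) (E : G ≃+ A × B) (r : A →+ M) (t : B →+ A)
    (hφ : ∀ x y, φ (E.symm (x, y)) = r (x + t y)) : φ.ker ≃+ r.ker × B where
  toFun g := (⟨(E g).1 + t (E g).2, by
    rw [AddMonoidHom.mem_ker, ← hφ, Prod.mk.eta, E.symm_apply_apply]; exact g.2⟩, (E g).2)
  invFun u := ⟨E.symm (u.1 - t u.2, u.2), by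
    rw [AddMonoidHom.mem_ker, hφ, sub_add_cancel]; exact u.1.2⟩
  left_inv g := by ext1; simp
  right_inv u := by ext <;> simp
  map_add' g h := by ext <;> simp [add_add_add_comm]

section Parity

variable {k : ℕ} (a : Fin k → ℕ) (ha : ∀ i, a i ≠ 0) (J : Type*) [AddCommGroup J]
  (I : Finset (Fin k))

def parityHom : (∀ i : Fin k, ZMod (2 ^ a i)) × J →+ ZMod 2 :=
  ∑ i ∈ I, ((ZMod.castHom (dvd_pow_self 2 (ha i)) (ZMod 2)).toAddMonoidHom.comp
      ((Pi.evalAddMonoidHom (fun j => ZMod (2 ^ a j)) i).comp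
        (AddMonoidHom.fst (∀ j : Fin k, ZMod (2 ^ a j)) J)))

theorem Hsub_eq_ker_parityHom : Hsub a ha J I = (parityHom a ha J I).ker := rfl

variable {I} {i : Fin k}

def tailLift (hle : ∀ j ∈ I, a i ≤ a j) :
    (∀ j : { j // j ≠ i }, ZMod (2 ^ a j)) × J →+ ZMod (2 ^ a i) :=
  ∑ j : { j // j ≠ i }, if h : (j : Fin k) ∈ I then
    (ZMod.castHom (pow_dvd_pow 2 (hle j h)) _).toAddMonoidHom.comp
      ((Pi.evalAddMonoidHom (fun l : { l // l ≠ i } => ZMod (2 ^ a l)) j).comp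
        (AddMonoidHom.fst _ J))
  else 0

theorem parityHom_piProdSplitAt_symm (hi : i ∈ I) (hle : ∀ j ∈ I, a i ≤ a j)
    (x : ZMod (2 ^ a i)) (y : (∀ j : { j // j ≠ i }, ZMod (2 ^ a j)) × J) :
    parityHom a ha J I ((AddEquiv.piProdSplitAt i (fun j => ZMod (2 ^ a j)) J).symm (x, y)) =
      ZMod.castHom (dvd_pow_self 2 (ha i)) (ZMod 2) (x + tailLift a J hle y) := by
  rw [parityHom, AddMonoidHom.finsetSum_apply]
  conv_lhs => rw [← Finset.univ_inter I, ← Finset.sum_ite_mem]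
  rw [Fintype.sum_eq_add_sum_subtype_ne _ i, if_pos hi, map_add, tailLift,
    AddMonoidHom.finsetSum_apply, map_sum]
  congr 1
  · simp
  refine Finset.sum_congr rfl fun j _ => ?_
  split_ifs with hj
  · simp only [AddMonoidHom.comp_apply, Pi.evalAddMonoidHom_apply, AddMonoidHom.coe_fst,
      AddEquiv.piProdSplitAt_symm_apply_ne, RingHom.toAddMonoidHom_eq_coe, AddMonoidHom.coe_coe]
    exact (DFunLike.congr_fun (ZMod.castHom_comp (dvd_pow_self 2 (ha i)) _) _).symm
  · simp

end Parity

theorem stmt3_general {k : ℕ} (a : Fin k → ℕ) (ha : ∀ i, a i ≠ 0) (hmono : Monotone a)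
    (J : Type*) [AddCommGroup J]
    (I : Finset (Fin k)) (hI : I.Nonempty) :
    Nonempty ((Hsub a ha J I) ≃+
      ((∀ j : Fin k, ZMod (2 ^ (if j = I.min' hI then a j - 1 else a j))) × J)) := by
  set i := I.min' hI
  have hle : ∀ j ∈ I, a i ≤ a j := fun j hj => hmono (I.min'_le j hj)
  have hhalf : 2 ^ a i / 2 = 2 ^ (if i = i then a i - 1 else a i) := by
    rw [if_pos rfl, ← Nat.pow_div (Nat.one_le_iff_ne_zero.mpr (ha i)) two_pos, pow_one]
  have hhead : (ZMod.castHom (dvd_pow_self 2 (ha i)) (ZMod 2)).toAddMonoidHom.ker ≃+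
      ZMod (2 ^ (if i = i then a i - 1 else a i)) :=
    (ZMod.kerCastHomEquiv _).trans (ZMod.ringEquivCongr hhalf).toAddEquiv
  have htail : (∀ j : { j // j ≠ i }, ZMod (2 ^ a j)) ≃+
      ∀ j : { j // j ≠ i }, ZMod (2 ^ (if (j : Fin k) = i then a j - 1 else a j)) :=
    AddEquiv.piCongrRight fun j => (ZMod.ringEquivCongr (by rw [if_neg j.2])).toAddEquiv
  rw [Hsub_eq_ker_parityHom]
  exact ⟨((parityHom a ha J I).kerEquivOfShear (AddEquiv.piProdSplitAt i _ J) _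
    (tailLift a J hle) (parityHom_piProdSplitAt_symm a ha J (I.min'_mem hI) hle)).trans <|
    (hhead.prodCongr (htail.prodCongr (AddEquiv.refl J))).trans
      (AddEquiv.piProdSplitAt i (fun j => ZMod (2 ^ (if j = i then a j - 1 else a j))) J).symm⟩

/-- For nonempty `I` with `i = min I`, the subgroup `H_I` of
`G = Z_{2^{a_1}} ⊕ ... ⊕ Z_{2^{a_k}} ⊕ J` is isomorphic to the direct sum in which the
`i`-th cyclic factor `Z_{2^{a_i}}` is replaced by `Z_{2^{a_i - 1}}`. -/
theorem stmt3 {k : ℕ} (a : Fin k → ℕ) (ha : ∀ i, a i ≠ 0) (hmono : Monotone a)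
    (J : Type*) [AddCommGroup J] [Fintype J] (hJ : Odd (Fintype.card J))
    (I : Finset (Fin k)) (hI : I.Nonempty) :
    Nonempty ((Hsub a ha J I) ≃+
      ((∀ j : Fin k, ZMod (2 ^ (if j = I.min' hI then a j - 1 else a j))) × J)) :=
  stmt3_general a ha hmono J I hI
end

section
/- Let G be a finite abelian group of order 2n, E a subgroup of index 2, and O = G \ E the nontrivial coset. Let W = { a + a : a ∈ O }, and let r(E) = |{x ∈ E : 2x = 0}|. Then |W| = n / r(E). -/
/-- Let `G` be a finite abelian group of order `2n`, `E` an index-2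
subgroup, `O = G \ E`, and `W = {a + a : a ∈ O}`. Then `|W| = n / r(E)`, where
`r(E) = |{x ∈ E : 2x = 0}|`. -/
theorem stmt7 {G : Type*} [AddCommGroup G] [Fintype G] {n : ℕ}
    (hn : Fintype.card G = 2 * n) (E : AddSubgroup G) (hE : E.index = 2) :
    ((fun a : G => a + a) '' ((E : Set G)ᶜ)).ncard =
      n / {x ∈ (E : Set G) | x + x = 0}.ncard := by
  obtain ⟨a, ha⟩ := AddSubgroup.index_eq_two_iff.mp hE
  set f : G →+ G := AddMonoidHom.mk' (fun x => x + x) (fun x y => by abel_nf) with hf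
  set f' : E →+ G := f.comp E.subtype with hf'
  have hcompl : (E : Set G)ᶜ = (fun e => e - a) '' (E : Set G) := by
    ext b
    simp only [Set.mem_compl_iff, Set.mem_image, SetLike.mem_coe]
    constructor
    · intro hb
      rcases ha b with ⟨h1, h2⟩ | ⟨h1, h2⟩
      · exact ⟨b + a, h1, by abel⟩
      · exact absurd h1 hb
    · rintro ⟨e, he, rfl⟩
      rcases ha (e - a) with ⟨h1, h2⟩ | ⟨h1, h2⟩
      · exact h2
      · exact absurd he (by simpa using h2)
  have himg : (fun a : G => a + a) '' ((E : Set G)ᶜ)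
      = (fun x => x - (a + a)) '' ((fun x => x + x) '' (E : Set G)) := by
    rw [hcompl, ← Set.image_comp, ← Set.image_comp]
    apply Set.image_congr
    intro x _
    simp only [Function.comp]
    abel
  have hinj : Function.Injective (fun x : G => x - (a + a)) := fun x y h => by
    simpa using sub_left_injective h
  have hL : ((fun a : G => a + a) '' ((E : Set G)ᶜ)).ncard
      = Nat.card f'.range := by
    rw [himg, Set.ncard_image_of_injective _ hinj]
    have hr : (f'.range : Set G) = (fun x : G => x + x) '' (E : Set G) := by
      ext y
      simp only [AddMonoidHom.coe_range, Set.mem_range, Set.mem_image, SetLike.mem_coe, hf', hf]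
      constructor
      · rintro ⟨x, rfl⟩; exact ⟨x, x.2, rfl⟩
      · rintro ⟨x, hx, rfl⟩; exact ⟨⟨x, hx⟩, rfl⟩
    rw [← hr]
    exact (Nat.card_coe_set_eq _).symm
  -- kernel card = ncard of the set
  have hker : Nat.card f'.ker = {x ∈ (E : Set G) | x + x = 0}.ncard := by
    rw [← Nat.card_coe_set_eq]
    refine Nat.card_congr
      { toFun := fun x => ⟨x.1.1, x.1.2, by
          exact x.2⟩
        invFun := fun y => ⟨⟨y.1, y.2.1⟩, by
          exact y.2.2⟩
        left_inv := fun x => rfl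
        right_inv := fun y => rfl }
  -- card E = n
  have hcardE : Nat.card E = n := by
    have h := AddSubgroup.index_mul_card E
    have hG : Nat.card G = 2 * n := by rw [Nat.card_eq_fintype_card, hn]
    rw [hE, hG] at h
    omega
  -- Lagrange / first iso
  have hlag : Nat.card f'.range * Nat.card f'.ker = n := by
    have h1 : Nat.card (E ⧸ f'.ker) = Nat.card f'.range :=
      Nat.card_congr (QuotientAddGroup.quotientKerEquivRange f').toEquiv
    have h2 := AddSubgroup.card_eq_card_quotient_mul_card_addSubgroup f'.ker
    rw [hcardE, h1] at h2
    omega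
  have hkpos : 0 < {x ∈ (E : Set G) | x + x = 0}.ncard := by
    refine Set.ncard_pos (Set.toFinite _) |>.mpr ⟨0, E.zero_mem, by simp⟩
  rw [hL, ← hlag, hker, Nat.mul_div_cancel _ hkpos]
end

section
/- Let G be an abelian group of order 2n, E a subgroup of index 2, O = G \ E, and let 0 ≠ x ∈ E. Define the Cayley graph G_x on vertex set O with edges {y,z}, y ≠ z, such that y + z = x or ±(y - z) = x. Let r(O) = |{a ∈ O : 2a = 0}|, r(E) = |{a ∈ E : 2a = 0}|, R(G) = {a ∈ G : 2a = 0}, and W = {a + a : a ∈ O}. Then the number of edges of G_x equals n - r(O)/2 - (r(E)/2)·1[x ∈ W] + ((n - r(O))/2)·1[x ∉ R(G)]. -/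
/-!
For `y ∈ O` the neighbours of `y` in `G_x` are the elements of `{x - y, y + x, y - x}` other
than `y`; they lie in `O` because `x ∈ E`. So `deg y` is `3` minus the coincidences among
these, which are governed by `2y = x`, `2y = 0`, `2y = 2x` and `2x = 0`, and summing over the
`n` vertices counts the edges twice. Translation by `x` shows `#{y ∈ O | 2y = 2x} = r(O)`, and
if `x = 2a` with `a ∈ O`, translation by `a` maps the `2`-torsion of `E` onto
`{y ∈ O | 2y = x}` since `O - a = E`, giving `r(E)·1[x ∈ W]` for the last count.
-/

/-- The Cayley graph `G_S` on the nontrivial coset `O = G \ H` of an index-2 subgroup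
`H`: vertices are the elements of `O`, and `{y, z}` (with `y ≠ z`) is an edge iff
`y + z ∈ S` or `y - z ∈ S` or `z - y ∈ S`. -/
def cayley {G : Type*} [AddCommGroup G] (H : AddSubgroup G) (S : Set G) :
    SimpleGraph {g : G // g ∉ H} where
  Adj y z := y ≠ z ∧ ((y : G) + z ∈ S ∨ (y : G) - z ∈ S ∨ (z : G) - y ∈ S)
  symm := by
    constructor
    rintro y z ⟨h1, h2⟩
    refine ⟨h1.symm, ?_⟩
    rcases h2 with h | h | h
    · exact Or.inl (by rwa [add_comm])
    · exact Or.inr (Or.inr h)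
    · exact Or.inr (Or.inl h)
  loopless := by constructor; rintro y ⟨h1, _⟩; exact h1 rfl

theorem sum_boole_subtype_eq_ncard {α R : Type*} [AddCommMonoidWithOne R] (q p : α → Prop)
    [Fintype {a // q a}] [DecidablePred p] :
    ∑ v : {a // q a}, (if p v then (1 : R) else 0) = ({a | q a ∧ p a}.ncard : R) := by
  rw [Finset.sum_boole, ← Fintype.card_subtype, ← Nat.card_eq_fintype_card]
  exact congrArg Nat.cast (Nat.card_congr (Equiv.subtypeSubtypeEquivSubtypeInter q p))

theorem SimpleGraph.two_mul_ncard_edgeSet {V : Type*} [Fintype V] (Γ : SimpleGraph V)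
    [DecidableRel Γ.Adj] : 2 * Γ.edgeSet.ncard = ∑ v, Γ.degree v := by
  rw [Γ.sum_degrees_eq_twice_card_edges, ← Set.ncard_coe_finset, SimpleGraph.coe_edgeFinset]

section AddCommGroup
variable {G : Type*} [AddCommGroup G] {x : G}

theorem card_erase_sub_add_sub [DecidableEq G] (hx : x ≠ 0) (y : G) :
    ((({x - y, y + x, y - x} : Finset G).erase y).card : ℚ) =
      3 - (if x + x = 0 then 1 else 0) - (if y + y = x then 1 else 0)
        - (if y + y = 0 then 1 else 0)
        - (if x + x = 0 then 0 else 1) * (if y + y = x + x then 1 else 0) := by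
  have hsub : x - y = y ↔ y + y = x := by rw [sub_eq_iff_eq_add, eq_comm]
  have hpm : y + x = y - x ↔ x + x = 0 := by
    rw [sub_eq_add_neg, add_right_inj, eq_neg_iff_add_eq_zero]
  have hp : x - y = y + x ↔ y + y = 0 := by
    rw [← sub_eq_zero, show x - y - (y + x) = -(y + y) by abel, neg_eq_zero]
  have hm : x - y = y - x ↔ y + y = x + x := by
    rw [sub_eq_sub_iff_add_eq_add, eq_comm]
  have hy : y ∉ ({y + x, y - x} : Finset G) := by
    simpa [Finset.mem_insert, Finset.mem_singleton, eq_comm (a := y), sub_eq_self] using hx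
  have hcard : ({y + x, y - x} : Finset G).card = if x + x = 0 then 1 else 2 := by
    simp only [Finset.card_insert_eq_ite, Finset.mem_singleton, hpm, Finset.card_singleton]
  have hmem : x - y ∈ ({y + x, y - x} : Finset G) ↔ y + y = 0 ∨ y + y = x + x := by
    rw [Finset.mem_insert, Finset.mem_singleton, hp, hm]
  have hcard' : (({x - y, y + x, y - x} : Finset G).erase y).card =
      if x - y = y ∨ x - y ∈ ({y + x, y - x} : Finset G) then
        ({y + x, y - x} : Finset G).card else ({y + x, y - x} : Finset G).card + 1 := by
    by_cases h : x - y = y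
    · rw [h, Finset.erase_insert hy, if_pos (Or.inl rfl)]
    · rw [Finset.erase_insert_of_ne h, Finset.erase_eq_of_notMem hy, Finset.card_insert_eq_ite]
      simp only [h, false_or]
  have h₁ : y + y = x → y + y ≠ 0 := fun h h' => hx (h ▸ h')
  have h₂ : y + y = x → y + y ≠ x + x := fun h h' => hx (by rw [h] at h'; simpa using h')
  have h₃ : y + y = 0 → y + y = x + x → x + x = 0 := fun h h' => h' ▸ h
  rw [hcard', hcard]
  simp only [hmem, hsub]
  split_ifs <;> simp_all <;> norm_num

variable {H : AddSubgroup G}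

theorem AddSubgroup.sub_mem_of_index_two (hH : H.index = 2) {a b : G} (ha : a ∉ H)
    (hb : b ∉ H) : a - b ∈ H := by
  rw [sub_eq_add_neg, AddSubgroup.add_mem_iff_of_index_two hH, H.neg_mem_iff]
  exact iff_of_false ha hb

theorem AddSubgroup.two_mul_ncard_compl_of_index_two [Finite G] (hH : H.index = 2) :
    2 * ((H : Set G)ᶜ).ncard = Nat.card G := by
  have hcard := H.card_mul_index
  have hsplit := Set.ncard_add_ncard_compl (H : Set G)
  have hH' : (H : Set G).ncard = Nat.card H := (Nat.card_coe_set_eq _).symm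
  rw [hH] at hcard
  omega

theorem ncard_sep_add_self_eq_of_translate {S T : Set G} (c : G)
    (hST : ∀ y, y ∈ T ↔ y - c ∈ S) :
    {y ∈ T | y + y = c + c}.ncard = {y ∈ S | y + y = 0}.ncard := by
  have himage : {y ∈ T | y + y = c + c} = (· + c) '' {y ∈ S | y + y = 0} := by
    ext y
    constructor
    · rintro ⟨hy, hyy⟩
      refine ⟨y - c, ⟨(hST y).1 hy, ?_⟩, sub_add_cancel y c⟩
      rw [show y - c + (y - c) = y + y - (c + c) by abel, hyy, sub_self]
    · rintro ⟨z, ⟨hz, hzz⟩, rfl⟩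
      refine ⟨(hST _).2 (by rwa [add_sub_cancel_right]), ?_⟩
      rw [show z + c + (z + c) = z + z + (c + c) by abel, hzz, zero_add]
  rw [himage, Set.ncard_image_of_injective _ (add_left_injective c)]

open scoped Classical in
theorem ncard_compl_sep_add_self_eq_of_index_two [Finite G] (hH : H.index = 2) :
    ({a ∈ (H : Set G)ᶜ | a + a = x}.ncard : ℚ) =
      {a ∈ (H : Set G) | a + a = 0}.ncard *
        (if x ∈ (fun a : G => a + a) '' (H : Set G)ᶜ then 1 else 0) := by
  split_ifs with hW
  · obtain ⟨a, ha, rfl⟩ := hW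
    rw [mul_one]
    refine congrArg Nat.cast (ncard_sep_add_self_eq_of_translate a fun y => ?_)
    refine ⟨fun hy => H.sub_mem_of_index_two hH hy ha, fun hya hy => ha ?_⟩
    simpa using H.sub_mem hy hya
  · rw [mul_zero, Nat.cast_eq_zero, Set.ncard_eq_zero]
    exact Set.eq_empty_of_forall_notMem fun y ⟨hy, hyy⟩ => hW ⟨y, hy, hyy⟩

theorem ncard_compl_sep_add_self_eq_add_self (hx : x ∈ H) :
    {a ∈ (H : Set G)ᶜ | a + a = x + x}.ncard = {a ∈ (H : Set G)ᶜ | a + a = 0}.ncard :=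
  ncard_sep_add_self_eq_of_translate x fun y => by
    simp only [Set.mem_compl_iff, SetLike.mem_coe, sub_eq_add_neg,
      H.add_mem_cancel_right (H.neg_mem hx)]

theorem cayley_singleton_adj_iff {y z : {g : G // g ∉ H}} :
    (cayley H {x}).Adj y z ↔ y ≠ z ∧ (z : G) ∈ ({x - y, y + x, y - x} : Set G) := by
  have h₁ : (y : G) + z = x ↔ (z : G) = x - y := by rw [eq_sub_iff_add_eq']
  have h₂ : (y : G) - z = x ↔ (z : G) = y - x := by
    rw [sub_eq_iff_eq_add, eq_sub_iff_add_eq', eq_comm]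
  have h₃ : (z : G) - y = x ↔ (z : G) = y + x := sub_eq_iff_eq_add'
  simp only [cayley, Set.mem_singleton_iff, Set.mem_insert_iff, h₁, h₂, h₃]
  tauto

open scoped Classical in
theorem map_neighborFinset_cayley_singleton [Fintype G] (hx : x ∈ H) (y : {g : G // g ∉ H}) :
    ((cayley H {x}).neighborFinset y).map (Function.Embedding.subtype _) =
      ({x - y, y + x, y - x} : Finset G).erase y := by
  ext z
  simp only [Finset.mem_map, SimpleGraph.mem_neighborFinset, cayley_singleton_adj_iff,
    Function.Embedding.coe_subtype, Finset.mem_erase, Finset.mem_insert, Finset.mem_singleton,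
    Set.mem_insert_iff, Set.mem_singleton_iff]
  constructor
  · rintro ⟨z, ⟨hyz, hz⟩, rfl⟩
    exact ⟨fun h => hyz (Subtype.ext h.symm), hz⟩
  · rintro ⟨hzy, hz⟩
    have hzH : z ∉ H := by
      rcases hz with rfl | rfl | rfl
      · exact fun h => y.2 (by simpa using H.sub_mem hx h)
      · exact fun h => y.2 (by simpa using H.sub_mem h hx)
      · exact fun h => y.2 (by simpa using H.add_mem h hx)
    exact ⟨⟨z, hzH⟩, ⟨fun h => hzy (congrArg Subtype.val h).symm, hz⟩, rfl⟩

open scoped Classical in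
theorem two_mul_ncard_edgeSet_cayley_singleton [Fintype G] (hx : x ∈ H) (hx0 : x ≠ 0) :
    (2 * (cayley H {x}).edgeSet.ncard : ℚ) =
      3 * ((H : Set G)ᶜ).ncard - (if x + x = 0 then 1 else 0) * ((H : Set G)ᶜ).ncard
        - {a ∈ (H : Set G)ᶜ | a + a = x}.ncard - {a ∈ (H : Set G)ᶜ | a + a = 0}.ncard
        - (if x + x = 0 then 0 else 1) * {a ∈ (H : Set G)ᶜ | a + a = x + x}.ncard := by
  have hdeg (y : {g : G // g ∉ H}) : ((cayley H {x}).degree y : ℚ) =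
      3 - (if x + x = 0 then 1 else 0) - (if (y : G) + y = x then 1 else 0)
        - (if (y : G) + y = 0 then 1 else 0)
        - (if x + x = 0 then 0 else 1) * (if (y : G) + y = x + x then 1 else 0) := by
    rw [← SimpleGraph.card_neighborFinset_eq_degree, ← Finset.card_map,
      map_neighborFinset_cayley_singleton hx, card_erase_sub_add_sub hx0]
  rw [← Nat.cast_ofNat, ← Nat.cast_mul, SimpleGraph.two_mul_ncard_edgeSet, Nat.cast_sum,
    Finset.sum_congr rfl fun y _ => hdeg y]
  have hO : Fintype.card {g : G // g ∉ H} = ((H : Set G)ᶜ).ncard := by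
    rw [← Nat.card_eq_fintype_card, ← Nat.card_coe_set_eq]; rfl
  simp only [Finset.sum_sub_distrib, ← Finset.mul_sum, Finset.sum_const, Finset.card_univ, hO,
    nsmul_eq_mul]
  rw [sum_boole_subtype_eq_ncard (fun g => g ∉ H) (fun g => g + g = x),
    sum_boole_subtype_eq_ncard (fun g => g ∉ H) (fun g => g + g = 0),
    sum_boole_subtype_eq_ncard (fun g => g ∉ H) (fun g => g + g = x + x)]
  simp only [Set.mem_compl_iff, SetLike.mem_coe]
  ring

end AddCommGroup

open Classical in
/-- For `0 ≠ x ∈ E`, the number of edges of the Cayley graph `G_x` on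
`O = G \ E` equals `n - r(O)/2 - (r(E)/2)·1[x ∈ W] + ((n - r(O))/2)·1[x ∉ R(G)]`,
where `W = {a + a : a ∈ O}`. -/
theorem stmt9 {G : Type*} [AddCommGroup G] [Fintype G] {n : ℕ}
    (hn : Fintype.card G = 2 * n) (E : AddSubgroup G) (hE : E.index = 2)
    (x : G) (hx : x ∈ E) (hx0 : x ≠ 0) :
    ((cayley E {x}).edgeSet.ncard : ℚ) =
      (n : ℚ) - ({a ∈ ((E : Set G)ᶜ) | a + a = 0}.ncard : ℚ) / 2
        - (({a ∈ (E : Set G) | a + a = 0}.ncard : ℚ) / 2) *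
            (if x ∈ (fun a : G => a + a) '' ((E : Set G)ᶜ) then 1 else 0)
        + (((n : ℚ) - ({a ∈ ((E : Set G)ᶜ) | a + a = 0}.ncard : ℚ)) / 2) *
            (if x + x = 0 then 0 else 1) := by
  have hO : ((E : Set G)ᶜ).ncard = n := by
    have := E.two_mul_ncard_compl_of_index_two hE
    rw [Nat.card_eq_fintype_card, hn] at this
    omega
  have hedges := two_mul_ncard_edgeSet_cayley_singleton hx hx0
  rw [ncard_compl_sep_add_self_eq_add_self hx, ncard_compl_sep_add_self_eq_of_index_two hE, hO]
    at hedges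
  split_ifs at hedges ⊢ <;> linarith
end

section
/- Let G be an abelian group of order 2n, E a subgroup of index 2, O = G \ E, and 0 ≠ x ∈ E. Let G_x be the Cayley graph on O with edges {y,z} such that y+z = x or ±(y-z) = x. Then e(G_x) ≥ max{ n - r(G), n/2 }, where r(G) = |{a ∈ G : 2a = 0}|. -/
open Finset

namespace SimpleGraph

variable {V : Type*} [Fintype V] (Γ : SimpleGraph V) [DecidableRel Γ.Adj]

theorem two_mul_card_le_of_degree_ge (D : Finset V)
    (h1 : ∀ v, 1 ≤ Γ.degree v) (h2 : ∀ v ∉ D, 2 ≤ Γ.degree v) :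
    2 * Fintype.card V ≤ 2 * #Γ.edgeFinset + #D := by
  classical
  calc 2 * Fintype.card V = ∑ _v : V, 2 := by simp [mul_comm]
    _ ≤ ∑ v, (Γ.degree v + if v ∈ D then 1 else 0) := by
      refine sum_le_sum fun v _ => ?_
      by_cases hv : v ∈ D
      · simpa [hv] using h1 v
      · simpa [hv] using h2 v hv
    _ = 2 * #Γ.edgeFinset + #D := by
      rw [sum_add_distrib, sum_degrees_eq_twice_card_edges, sum_ite_mem, univ_inter, sum_const,
        smul_eq_mul, mul_one]

end SimpleGraph

theorem card_filter_add_self_eq_le {G : Type*} [AddCommGroup G] [Fintype G] [DecidableEq G]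
    (c : G) : #{a : G | a + a = c} ≤ #{a : G | a + a = 0} := by
  obtain ⟨a₀, ha₀⟩ | hc := em (∃ a₀ : G, a₀ + a₀ = c)
  · refine card_le_card_of_injOn (· - a₀) (fun a ha => ?_)
      (fun a _ b _ h => sub_left_injective h)
    simp only [coe_filter, mem_univ, true_and, Set.mem_ofPred] at ha ⊢
    rw [sub_add_sub_comm, ha, ha₀, sub_self]
  · simp [filter_false_of_mem fun a _ ha => hc ⟨a, ha⟩]

theorem card_filter_subtype_add_self_le {G : Type*} [AddCommGroup G] [Fintype G] [DecidableEq G]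
    (p : G → Prop) [DecidablePred p] (c : G) :
    #{y : {g // p g} | (y : G) + y = 0 ∨ (y : G) + y = c} ≤ 2 * #{a : G | a + a = 0} := by
  rw [← card_map (Function.Embedding.subtype p)]
  calc _ ≤ #(({a : G | a + a = 0} : Finset G) ∪ ({a : G | a + a = c} : Finset G)) := by
        refine card_le_card fun a ha => ?_
        simp only [mem_map, mem_filter, mem_univ, true_and, Function.Embedding.subtype_apply] at ha
        obtain ⟨y, hy, rfl⟩ := ha
        simpa using hy
    _ ≤ #{a : G | a + a = 0} + #{a : G | a + a = c} := card_union_le _ _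
    _ ≤ 2 * #{a : G | a + a = 0} := by linarith [card_filter_add_self_eq_le c]

namespace AddSubgroup

variable {G : Type*} [AddCommGroup G] (H : AddSubgroup G)

theorem two_mul_card_compl_of_index_eq_two [Fintype G] [DecidablePred (· ∈ H)]
    (hH : H.index = 2) : 2 * Fintype.card {g // g ∉ H} = Fintype.card G := by
  have h := H.index_mul_card
  rw [hH, Nat.card_eq_fintype_card, Nat.card_eq_fintype_card] at h
  rw [Fintype.card_subtype_compl, ← h]
  have : Fintype.card H ≤ Fintype.card G := Fintype.card_subtype_le _
  omega

end AddSubgroup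

section CayleyGraph

variable {G : Type*} [AddCommGroup G] {H : AddSubgroup G} {S : Set G} {x : G}

theorem cayley_adj_add_right (hxH : x ∈ H) (hxS : x ∈ S) (hx0 : x ≠ 0) (y : {g // g ∉ H}) :
    (cayley H S).Adj y ⟨y + x, (H.add_mem_cancel_right hxH).not.mpr y.2⟩ := by
  refine ⟨fun h => hx0 ?_, Or.inr (Or.inr (by simpa using hxS))⟩
  simpa using congrArg Subtype.val h

theorem cayley_adj_sub_left (hxH : x ∈ H) (hxS : x ∈ S) (y : {g // g ∉ H})
    (hy : (y : G) + y ≠ x) :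
    (cayley H S).Adj y ⟨x - y, fun h => y.2 (by simpa using H.sub_mem hxH h)⟩ :=
  ⟨fun h => hy (eq_sub_iff_add_eq.mp (congrArg Subtype.val h)), Or.inl (by simpa using hxS)⟩

theorem one_le_degree_cayley (hxH : x ∈ H) (hxS : x ∈ S) (hx0 : x ≠ 0) (y : {g // g ∉ H})
    [Fintype ((cayley H S).neighborSet y)] : 1 ≤ (cayley H S).degree y :=
  (cayley H S).degree_pos_iff_exists_adj y |>.mpr ⟨_, cayley_adj_add_right hxH hxS hx0 y⟩

theorem two_le_degree_cayley (hxH : x ∈ H) (hxS : x ∈ S) (hx0 : x ≠ 0) (y : {g // g ∉ H})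
    [Fintype ((cayley H S).neighborSet y)] (hy0 : (y : G) + y ≠ 0) (hyx : (y : G) + y ≠ x) :
    2 ≤ (cayley H S).degree y := by
  rw [← SimpleGraph.card_neighborFinset_eq_degree]
  refine one_lt_card.mpr ⟨_, (SimpleGraph.mem_neighborFinset ..).mpr
    (cayley_adj_add_right hxH hxS hx0 y), _, (SimpleGraph.mem_neighborFinset ..).mpr
    (cayley_adj_sub_left hxH hxS y hyx), fun h => hy0 ?_⟩
  have h' : (y : G) + x = x - y := congrArg Subtype.val h
  rw [← sub_eq_zero.mpr h']
  abel

theorem two_mul_card_compl_le_cayley [Fintype G] [DecidableEq G] [DecidablePred (· ∈ H)]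
    [DecidableRel (cayley H S).Adj] (hxH : x ∈ H) (hxS : x ∈ S) (hx0 : x ≠ 0) :
    2 * Fintype.card {g // g ∉ H} ≤
      2 * #(cayley H S).edgeFinset + #{y : {g // g ∉ H} | (y : G) + y = 0 ∨ (y : G) + y = x} :=
  (cayley H S).two_mul_card_le_of_degree_ge _ (fun y => one_le_degree_cayley hxH hxS hx0 y)
    fun y hy => by
      simp only [mem_filter, mem_univ, true_and, not_or] at hy
      exact two_le_degree_cayley hxH hxS hx0 y hy.1 hy.2

end CayleyGraph

/-- For `0 ≠ x ∈ E`, the Cayley graph `G_x` on `O = G \ E` has at least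
`max{n - r(G), n/2}` edges, where `r(G) = |{a ∈ G : 2a = 0}|`. -/
theorem stmt10 {G : Type*} [AddCommGroup G] [Fintype G] {n : ℕ}
    (hn : Fintype.card G = 2 * n) (E : AddSubgroup G) (hE : E.index = 2)
    (x : G) (hx : x ∈ E) (hx0 : x ≠ 0) :
    max ((n : ℚ) - ({a : G | a + a = 0}.ncard : ℚ)) ((n : ℚ) / 2) ≤
      ((cayley E {x}).edgeSet.ncard : ℚ) := by
  classical
  have hO := E.two_mul_card_compl_of_index_eq_two hE
  have hdeg := two_mul_card_compl_le_cayley hx (Set.mem_singleton x) hx0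
  have hDr := card_filter_subtype_add_self_le (· ∉ E) x
  have hDn := card_le_univ {y : {g // g ∉ E} | (y : G) + y = 0 ∨ (y : G) + y = x}
  rw [hn] at hO
  rw [← SimpleGraph.coe_edgeFinset, ← coe_filter_univ, Set.ncard_coe_finset,
    Set.ncard_coe_finset]
  refine max_le ?_ ?_
  · have : n ≤ #(cayley E {x}).edgeFinset + #{a : G | a + a = 0} := by omega
    rw [sub_le_iff_le_add]
    exact_mod_cast this
  · have : n ≤ 2 * #(cayley E {x}).edgeFinset := by omega
    rw [div_le_iff₀ two_pos, mul_comm]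
    exact_mod_cast this
end

section
/- Let G be an abelian group of order 2n, E a subgroup of index 2, O = G \ E, and x, y ∈ E with x ∉ {y, -y}. Then the number of common edges of the Cayley graphs G_x and G_y is at most 2·r(E), where r(E) = |{e ∈ E : 2e = 0}|. -/
section

variable {G : Type*} [AddCommGroup G]

theorem AddSubgroup.sub_mem_of_notMem_of_index_two {H : AddSubgroup G} (hH : H.index = 2)
    {a b : G} (ha : a ∉ H) (hb : b ∉ H) : a - b ∈ H := by
  rw [sub_eq_add_neg, AddSubgroup.add_mem_iff_of_index_two hH, neg_mem_iff]
  exact iff_of_false ha hb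

theorem AddSubgroup.ncard_setOf_add_self_eq_le [Finite G] (H : AddSubgroup G) {S : Set G}
    (hS : ∀ a ∈ S, ∀ b ∈ S, a - b ∈ H) (s : G) :
    {c ∈ S | c + c = s}.ncard ≤ {e ∈ (H : Set G) | e + e = 0}.ncard := by
  rcases Set.eq_empty_or_nonempty {c ∈ S | c + c = s} with h | ⟨c₀, hc₀S, hc₀⟩
  · simp [h]
  refine Set.ncard_le_ncard_of_injOn (· - c₀) ?_ (fun u _ v _ huv ↦ sub_left_injective huv)
    (Set.toFinite _)
  rintro c ⟨hcS, hc⟩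
  refine ⟨hS c hcS c₀ hc₀S, ?_⟩
  calc c - c₀ + (c - c₀) = (c + c) - (c₀ + c₀) := by abel
    _ = 0 := by rw [hc, hc₀, sub_self]

theorem add_eq_and_sub_eq_of_ne_of_ne_neg {a b x y : G} (hxy : x ≠ y) (hxy' : x ≠ -y)
    (hx : a + b = x ∨ a - b = x ∨ b - a = x) (hy : a + b = y ∨ a - b = y ∨ b - a = y) :
    (a + b = x ∧ (a - b = y ∨ b - a = y)) ∨ (a + b = y ∧ (a - b = x ∨ b - a = x)) := by
  grind

theorem exists_add_self_eq_and_eq_of_add_eq {a b x y : G} (hx : a + b = x)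
    (hy : a - b = y ∨ b - a = y) :
    ∃ c, (c = a ∨ c = b) ∧ c + c = x + y ∧ s(a, b) = s(c, x - c) := by
  rcases hy with hy | hy
  · refine ⟨a, Or.inl rfl, by rw [← hx, ← hy]; abel, ?_⟩
    rw [← hx, add_sub_cancel_left]
  · refine ⟨b, Or.inr rfl, by rw [← hx, ← hy]; abel, ?_⟩
    rw [← hx, add_sub_cancel_right, Sym2.eq_swap]

theorem map_val_mem_of_mem_edgeSet_inter {H : AddSubgroup G} {x y : G} (hxy : x ≠ y)
    (hxy' : x ≠ -y) {e : Sym2 {g : G // g ∉ H}}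
    (he : e ∈ (cayley H {x}).edgeSet ∩ (cayley H {y}).edgeSet) :
    e.map Subtype.val ∈ (fun c ↦ s(c, x - c)) '' {c | c ∉ H ∧ c + c = x + y} ∪
      (fun c ↦ s(c, y - c)) '' {c | c ∉ H ∧ c + c = x + y} := by
  induction e using Sym2.ind with
  | _ a b =>
    obtain ⟨⟨-, hx⟩, ⟨-, hy⟩⟩ := he
    simp only [Set.mem_singleton_iff] at hx hy
    have hout : ∀ c : G, c = a ∨ c = b → c ∉ H := by
      rintro c (rfl | rfl)
      exacts [a.2, b.2]
    rw [Sym2.map_mk]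
    rcases add_eq_and_sub_eq_of_ne_of_ne_neg hxy hxy' hx hy with ⟨hx, hy⟩ | ⟨hy, hx⟩
    · obtain ⟨c, hc, hcc, hab⟩ := exists_add_self_eq_and_eq_of_add_eq hx hy
      exact Or.inl ⟨c, ⟨hout c hc, hcc⟩, hab.symm⟩
    · obtain ⟨c, hc, hcc, hab⟩ := exists_add_self_eq_and_eq_of_add_eq hy hx
      exact Or.inr ⟨c, ⟨hout c hc, by rw [hcc, add_comm]⟩, hab.symm⟩

end

theorem stmt13_general {G : Type*} [AddCommGroup G] [Fintype G] (E : AddSubgroup G) (hE : E.index = 2)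
    (x y : G) (hxy1 : x ≠ y) (hxy2 : x ≠ -y) :
    ((cayley E {x}).edgeSet ∩ (cayley E {y}).edgeSet).ncard ≤
      2 * {e ∈ (E : Set G) | e + e = 0}.ncard := by
  set T := {c | c ∉ E ∧ c + c = x + y}
  have hT : T.ncard ≤ {e ∈ (E : Set G) | e + e = 0}.ncard :=
    E.ncard_setOf_add_self_eq_le (S := (E : Set G)ᶜ)
      (fun _ ha _ hb ↦ E.sub_mem_of_notMem_of_index_two hE ha hb) (x + y)
  calc ((cayley E {x}).edgeSet ∩ (cayley E {y}).edgeSet).ncard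
      = (Sym2.map Subtype.val '' ((cayley E {x}).edgeSet ∩ (cayley E {y}).edgeSet)).ncard :=
        (Set.ncard_image_of_injective _ (Sym2.map.injective Subtype.val_injective)).symm
    _ ≤ ((fun c ↦ s(c, x - c)) '' T ∪ (fun c ↦ s(c, y - c)) '' T).ncard :=
        Set.ncard_le_ncard (Set.image_subset_iff.mpr fun _ he ↦
          map_val_mem_of_mem_edgeSet_inter hxy1 hxy2 he) (Set.toFinite _)
    _ ≤ T.ncard + T.ncard :=
        (Set.ncard_union_le _ _).trans (add_le_add (Set.ncard_image_le (Set.toFinite _))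
          (Set.ncard_image_le (Set.toFinite _)))
    _ ≤ 2 * {e ∈ (E : Set G) | e + e = 0}.ncard := by omega

/-- For `x, y ∈ E` with `x ∉ {y, -y}`, the Cayley graphs `G_x` and `G_y`
on `O = G \ E` have at most `2·r(E)` common edges, where `r(E) = |{e ∈ E : 2e = 0}|`. -/
theorem stmt13 {G : Type*} [AddCommGroup G] [Fintype G] {n : ℕ}
    (hn : Fintype.card G = 2 * n) (E : AddSubgroup G) (hE : E.index = 2)
    (x y : G) (hx : x ∈ E) (hy : y ∈ E) (hxy1 : x ≠ y) (hxy2 : x ≠ -y) :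
    ((cayley E {x}).edgeSet ∩ (cayley E {y}).edgeSet).ncard ≤
      2 * {e ∈ (E : Set G) | e + e = 0}.ncard :=
  stmt13_general E hE x y hxy1 hxy2
end

section
/- Fix d ≥ 1 and a graph H on a vertex set V of size n with maximum degree at most d. Fix reals 0 < δ ≤ a ≤ 1/2 and k ∈ ℕ. Then the number of k-element subsets S ⊆ V with e(H[S]) ≥ a·k·d is at most (2e/δ²)^k · (n/k)^{k - (1-δ)·a·k}. -/
/-!
Count injective `k`-tuples instead of `k`-sets: every `k`-set has `k!` orderings. In a tuple `f`,
the back-degree `bᵢ` of position `i` (the number of earlier entries adjacent to `f i`) is at most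
`d`, and the `bᵢ` sum to at least `e(H[S]) ≥ a k d`; hence at least `(1 - δ) a k` positions are
heavy, i.e. `bᵢ ≥ c := ⌈a δ d⌉`. Once the set `I` of heavy positions is fixed, a heavy entry `f i`
must have `c` neighbours among the earlier entries, which leaves at most `k d / c ≤ k / δ²`
candidates for it, while every other entry has `n` choices. Summing over the `2ᵏ` sets `I` and
using `kᵏ ≤ k! eᵏ` gives the bound.
-/

open Finset
open scoped Nat Real

theorem pow_le_factorial_mul_exp_one_pow (k : ℕ) : (k : ℝ) ^ k ≤ k ! * rexp 1 ^ k := by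
  have h := Real.pow_div_factorial_le_exp (x := k) (Nat.cast_nonneg k) k
  rwa [div_le_iff₀ (by positivity), ← Real.exp_one_pow, mul_comm] at h

theorem pow_mul_pow_sub_le_factorial_mul {k n t : ℕ} (hk : 0 < k) (hkn : k ≤ n) (htk : t ≤ k)
    {m β τ : ℝ} (hm0 : 0 ≤ m) (hm : m ≤ β * k) (hβ : 1 ≤ β) (hτ : τ ≤ t) :
    m ^ t * (n : ℝ) ^ (k - t) ≤ k ! * (β * rexp 1) ^ k * ((n : ℝ) / k) ^ ((k : ℝ) - τ) := by
  have hk' : (0 : ℝ) < k := by exact_mod_cast hk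
  have hnk : (1 : ℝ) ≤ n / k := (one_le_div hk').2 (by exact_mod_cast hkn)
  have hkk : (k : ℝ) ^ k = k ^ t * k ^ (k - t) := by rw [← pow_add, Nat.add_sub_cancel' htk]
  calc m ^ t * (n : ℝ) ^ (k - t)
      ≤ (β * k) ^ t * (n : ℝ) ^ (k - t) := by gcongr
    _ ≤ β ^ k * ((k : ℝ) ^ t * (n : ℝ) ^ (k - t)) := by
        rw [mul_pow, mul_assoc]
        gcongr
    _ = β ^ k * ((k : ℝ) ^ k * ((n : ℝ) / k) ^ (k - t)) := by
        rw [hkk, mul_assoc, ← mul_pow, mul_div_cancel₀ _ hk'.ne']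
    _ ≤ β ^ k * ((k ! * rexp 1 ^ k) * ((n : ℝ) / k) ^ ((k : ℝ) - τ)) := by
        gcongr
        · exact pow_le_factorial_mul_exp_one_pow k
        · rw [← Real.rpow_natCast, Nat.cast_sub htk]
          exact Real.rpow_le_rpow_of_exponent_le hnk (by linarith)
    _ = k ! * (β * rexp 1) ^ k * ((n : ℝ) / k) ^ ((k : ℝ) - τ) := by ring

section SequentialChoice

variable {V : Type*} [DecidableEq V]

noncomputable def Finset.indexOf (s : Finset V) (v : V) : ℕ :=
  if h : v ∈ s then s.equivFin ⟨v, h⟩ else 0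

theorem Finset.indexOf_lt {s : Finset V} {v : V} (hv : v ∈ s) : s.indexOf v < #s := by
  simp [Finset.indexOf, hv]

theorem Finset.injOn_indexOf (s : Finset V) : Set.InjOn s.indexOf s := by
  intro v hv w hw h
  simp only [Finset.indexOf, mem_coe.mp hv, mem_coe.mp hw, dite_true] at h
  simpa using s.equivFin.injective (Fin.ext h)

theorem card_filter_forall_mem_le_prod {ι : Type*} [Fintype ι] [LinearOrder ι] [Fintype V]
    (Q : (ι → V) → ι → Finset V) (hQ : ∀ f g i, (∀ j < i, f j = g j) → Q f i = Q g i)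
    (b : ι → ℕ) (hb : ∀ f i, #(Q f i) ≤ b i) :
    #{f : ι → V | ∀ i, f i ∈ Q f i} ≤ ∏ i, b i := by
  -- Encode each `f i` by its position in `Q f i`; as `Q f i` only sees the entries before `i`,
  -- the code can be decoded by induction along `ι`.
  calc #{f : ι → V | ∀ i, f i ∈ Q f i}
      ≤ #(Fintype.piFinset fun i => range (b i)) := by
        refine card_le_card_of_injOn (fun f i => (Q f i).indexOf (f i)) ?_ ?_
        · intro f hf
          simp only [coe_filter, mem_univ, true_and, Set.mem_ofPred_eq] at hf
          simpa using fun i => (Finset.indexOf_lt (hf i)).trans_le (hb f i)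
        · intro f hf g hg hfg
          simp only [coe_filter, mem_univ, true_and, Set.mem_ofPred_eq] at hf hg
          funext i
          induction i using WellFoundedLT.induction with
          | _ i ih =>
            have hQi : Q f i = Q g i := hQ f g i ih
            have hi := congrFun hfg i
            simp only [hQi] at hi
            exact (Q g i).injOn_indexOf (hQi ▸ hf i) (hg i) hi
    _ = ∏ i, b i := by simp

end SequentialChoice

theorem card_mul_factorial_le_card_injective {V : Type*} [Fintype V] [DecidableEq V] (k : ℕ)
    (P : Set V → Prop) [DecidablePred P] :
    #{S : Finset V | #S = k ∧ P S} * k ! ≤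
      #{f : Fin k → V | Function.Injective f ∧ P (Set.range f)} := by
  refine (card_mul_le_card_mul (n := 1)
    (fun (S : Finset V) (f : Fin k → V) => Set.range f = S) (fun S hS => ?_) fun f _ => ?_).trans_eq
    (mul_one _)
  · obtain ⟨hSk, hPS⟩ := (mem_filter.mp hS).2
    have e₀ : Fin k ≃ S := (S.equivFinOfCardEq hSk).symm
    calc k ! = #(univ : Finset (Fin k ≃ S)) := by
          rw [Finset.card_univ, Fintype.card_equiv e₀, Fintype.card_fin]
      _ ≤ _ := by
        refine card_le_card_of_injOn (fun e i => (e i : V)) (fun e _ => ?_) fun e₁ _ e₂ _ h => ?_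
        · have hrange : Set.range (fun i => (e i : V)) = S := Set.ext fun v =>
            ⟨by rintro ⟨i, rfl⟩; exact (e i).2, fun hv => ⟨e.symm ⟨v, hv⟩, by simp⟩⟩
          rw [mem_coe, mem_bipartiteAbove, mem_filter]
          exact ⟨⟨mem_univ _, Subtype.val_injective.comp e.injective, hrange ▸ hPS⟩, hrange⟩
        · exact Equiv.ext fun i => Subtype.ext (congrFun h i)
  · refine card_le_one.2 fun S hS S' hS' => coe_injective ?_
    exact ((mem_bipartiteBelow _).1 hS).2.symm.trans ((mem_bipartiteBelow _).1 hS').2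

namespace SimpleGraph

variable {V ι : Type*} (H : SimpleGraph V) [DecidableRel H.Adj] [Fintype ι] [LinearOrder ι]

/-- With `v` left free, `{v | c ≤ H.backDegree f i v}` is the set of admissible values for a heavy
entry `f i`; it depends only on the entries of `f` before `i`. -/
def backDegree (f : ι → V) (i : ι) (v : V) : ℕ := #{j | j < i ∧ H.Adj (f j) v}

theorem backDegree_congr {f g : ι → V} {i : ι} (h : ∀ j < i, f j = g j) (v : V) :
    H.backDegree f i v = H.backDegree g i v := by
  unfold backDegree
  congr 1
  refine filter_congr fun j _ => ?_
  exact and_congr_right fun hj => by rw [h j hj]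

theorem backDegree_apply_le [Fintype V] {d : ℕ} (hdeg : ∀ v, H.degree v ≤ d) {f : ι → V}
    (hf : Function.Injective f) (i : ι) : H.backDegree f i (f i) ≤ d := by
  refine le_trans ?_ (hdeg (f i))
  rw [← card_neighborFinset_eq_degree]
  refine card_le_card_of_injOn f (fun j hj => ?_) hf.injOn
  simp only [coe_filter, mem_univ, true_and, Set.mem_ofPred_eq] at hj
  simpa using hj.2.symm

theorem card_filter_le_backDegree_mul_le [Fintype V] {d : ℕ} (hdeg : ∀ v, H.degree v ≤ d)
    (f : ι → V) (i : ι) (c : ℕ) :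
    #{v | c ≤ H.backDegree f i v} * c ≤ Fintype.card ι * d := by
  calc #{v | c ≤ H.backDegree f i v} * c
      ≤ ∑ v ∈ {v | c ≤ H.backDegree f i v}, H.backDegree f i v := by
        rw [← smul_eq_mul]
        exact card_nsmul_le_sum _ (H.backDegree f i) c fun v hv => (mem_filter.mp hv).2
    _ ≤ ∑ v, H.backDegree f i v := sum_le_sum_of_subset (subset_univ _)
    _ = ∑ j, #{v | j < i ∧ H.Adj (f j) v} := by
        simp only [backDegree, card_filter]
        exact sum_comm
    _ ≤ ∑ j : ι, d := by
        refine sum_le_sum fun j _ => le_trans (card_le_card fun v => ?_) (hdeg (f j))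
        simp
    _ = Fintype.card ι * d := by simp

theorem ncard_edgeSet_le_sum_card_lt (G : SimpleGraph ι) [DecidableRel G.Adj] :
    G.edgeSet.ncard ≤ ∑ i, #{j | j < i ∧ G.Adj j i} := by
  rw [← card_sigma, ← Set.ncard_coe_finset]
  refine Set.ncard_le_ncard_of_injOn (fun e => ⟨e.sup, e.inf⟩) ?_ ?_ (Set.toFinite _)
  · intro e he
    induction e using Sym2.ind with
    | _ a b =>
      have hab : G.Adj a b := he
      rcases hab.ne.lt_or_gt with h | h
      · simpa [h.le, h] using hab
      · simpa [h.le, h] using hab.symm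
  · intro e _ e' _ h
    simp only [Sigma.mk.injEq, heq_eq_eq] at h
    exact Sym2.inf_eq_inf_and_sup_eq_sup.mp ⟨h.2, h.1⟩

theorem ncard_edgeSet_induce_range_le {f : ι → V} (hf : Function.Injective f) :
    (H.induce (Set.range f)).edgeSet.ncard ≤ ∑ i, H.backDegree f i (f i) := by
  let e : H.comap f ≃g H.induce (Set.range f) :=
    { toEquiv := Equiv.ofInjective f hf, map_rel_iff' := by simp }
  rw [← Nat.card_coe_set_eq, ← Nat.card_congr e.mapEdgeSet, Nat.card_coe_set_eq]
  exact (H.comap f).ncard_edgeSet_le_sum_card_lt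

theorem card_filter_forall_le_backDegree_le [Fintype V] {d c : ℕ} (hdeg : ∀ v, H.degree v ≤ d)
    (hc : 0 < c) (I : Finset ι) :
    #{f : ι → V | ∀ i ∈ I, c ≤ H.backDegree f i (f i)} ≤
      (Fintype.card ι * d / c) ^ #I * Fintype.card V ^ (Fintype.card ι - #I) := by
  classical
  let Q : (ι → V) → ι → Finset V := fun f i =>
    if i ∈ I then ({v | c ≤ H.backDegree f i v} : Finset V) else univ
  calc #{f : ι → V | ∀ i ∈ I, c ≤ H.backDegree f i (f i)}
      ≤ #{f : ι → V | ∀ i, f i ∈ Q f i} := by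
        refine card_le_card fun f hf => ?_
        simp only [mem_filter, mem_univ, true_and] at hf ⊢
        intro i
        by_cases hi : i ∈ I <;> simp [Q, hi, hf i]
    _ ≤ ∏ i, if i ∈ I then Fintype.card ι * d / c else Fintype.card V := by
        refine card_filter_forall_mem_le_prod Q (fun f g i h => ?_) _ fun f i => ?_
        · simp only [Q, H.backDegree_congr h]
        · by_cases hi : i ∈ I
          · simpa [Q, hi, Nat.le_div_iff_mul_le hc] using
              H.card_filter_le_backDegree_mul_le hdeg f i c
          · simp [Q, hi]
    _ = (Fintype.card ι * d / c) ^ #I * Fintype.card V ^ (Fintype.card ι - #I) := by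
        rw [prod_ite, prod_const, prod_const, filter_mem_eq_inter, univ_inter, filter_not,
          filter_mem_eq_inter, univ_inter, card_univ_sdiff]

theorem ncard_edgeSet_induce_range_le_card_mul_add [Fintype V] {d : ℕ}
    (hdeg : ∀ v, H.degree v ≤ d) {f : ι → V} (hf : Function.Injective f) {θ : ℝ} (hθ : 0 ≤ θ) :
    ((H.induce (Set.range f)).edgeSet.ncard : ℝ) ≤
      #{i | ⌈θ⌉₊ ≤ H.backDegree f i (f i)} * d + Fintype.card ι * θ := by
  have hlight : ∀ i ∈ ({i | ¬ ⌈θ⌉₊ ≤ H.backDegree f i (f i)} : Finset ι),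
      (H.backDegree f i (f i) : ℝ) ≤ θ := fun i hi =>
    (Nat.lt_ceil.mp (not_le.mp (mem_filter.mp hi).2)).le
  calc ((H.induce (Set.range f)).edgeSet.ncard : ℝ)
      ≤ ∑ i, (H.backDegree f i (f i) : ℝ) := by
        exact_mod_cast H.ncard_edgeSet_induce_range_le hf
    _ = ∑ i ∈ {i | ⌈θ⌉₊ ≤ H.backDegree f i (f i)}, (H.backDegree f i (f i) : ℝ) +
        ∑ i ∈ {i | ¬ ⌈θ⌉₊ ≤ H.backDegree f i (f i)}, (H.backDegree f i (f i) : ℝ) :=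
        (sum_filter_add_sum_filter_not _ _ _).symm
    _ ≤ #{i | ⌈θ⌉₊ ≤ H.backDegree f i (f i)} * d +
        #({i | ¬ ⌈θ⌉₊ ≤ H.backDegree f i (f i)} : Finset ι) * θ := by
        gcongr
        · exact_mod_cast sum_le_card_nsmul _ _ _ fun i _ => H.backDegree_apply_le hdeg hf i
        · simpa using sum_le_card_nsmul _ _ _ hlight
    _ ≤ #{i | ⌈θ⌉₊ ≤ H.backDegree f i (f i)} * d + Fintype.card ι * θ := by
        gcongr
        exact_mod_cast card_le_univ _

theorem mul_card_le_card_filter_ceil_le_backDegree [Fintype V] {d : ℕ}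
    (hdeg : ∀ v, H.degree v ≤ d) (hd : 0 < d) {f : ι → V} (hf : Function.Injective f) {a δ : ℝ}
    (ha : 0 ≤ a) (hδ : 0 ≤ δ)
    (hdense : a * Fintype.card ι * d ≤ ((H.induce (Set.range f)).edgeSet.ncard : ℝ)) :
    (1 - δ) * a * Fintype.card ι ≤ #{i | ⌈a * δ * d⌉₊ ≤ H.backDegree f i (f i)} := by
  have hd' : (0 : ℝ) < d := by exact_mod_cast hd
  have hedges := H.ncard_edgeSet_induce_range_le_card_mul_add hdeg hf (θ := a * δ * d)
    (by positivity)
  refine le_of_mul_le_mul_right ?_ hd'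
  nlinarith

theorem card_filter_forall_ceil_le_backDegree_le [Fintype V] {d k : ℕ}
    (hdeg : ∀ v, H.degree v ≤ d) (hd : 0 < d) {δ a : ℝ} (hδ : 0 < δ) (hδa : δ ≤ a)
    (ha : a ≤ 1 / 2) (hk : 0 < k) (hkn : k ≤ Fintype.card V) {I : Finset (Fin k)}
    (hI : (1 - δ) * a * k ≤ #I) :
    (#{f : Fin k → V | ∀ i ∈ I, ⌈a * δ * d⌉₊ ≤ H.backDegree f i (f i)} : ℝ) ≤
      k ! * ((δ ^ 2)⁻¹ * rexp 1) ^ k *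
        ((Fintype.card V : ℝ) / k) ^ ((k : ℝ) - (1 - δ) * a * k) := by
  set c := ⌈a * δ * d⌉₊
  have hc : 0 < c := Nat.ceil_pos.2 (by have := hδ.trans_le hδa; positivity)
  have hcount : #{f : Fin k → V | ∀ i ∈ I, c ≤ H.backDegree f i (f i)} ≤
      (k * d / c) ^ #I * Fintype.card V ^ (k - #I) := by
    -- `convert` reconciles the `Fin`-specific decidability instances with the generic ones
    convert H.card_filter_forall_le_backDegree_le hdeg hc I using 3 <;> simp
  have hm : ((k * d / c : ℕ) : ℝ) ≤ (δ ^ 2)⁻¹ * k := by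
    have hc' : δ * δ * d ≤ c := le_trans (by gcongr) (Nat.le_ceil (a * δ * d))
    calc ((k * d / c : ℕ) : ℝ) ≤ (k * d : ℕ) / (c : ℝ) := Nat.cast_div_le
      _ ≤ (k * d : ℕ) / (δ * δ * d) := by gcongr
      _ = (δ ^ 2)⁻¹ * k := by push_cast; field_simp
  calc (#{f : Fin k → V | ∀ i ∈ I, c ≤ H.backDegree f i (f i)} : ℝ)
      ≤ ((k * d / c : ℕ) : ℝ) ^ #I * (Fintype.card V : ℝ) ^ (k - #I) := by
        exact_mod_cast hcount
    _ ≤ _ := pow_mul_pow_sub_le_factorial_mul hk hkn ((card_le_univ I).trans_eq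
        (Fintype.card_fin k)) (by positivity) hm (one_le_inv₀ (by positivity) |>.2 (by nlinarith))
        hI

theorem card_injective_dense_tuples_le [Fintype V] [DecidableEq V] {d k : ℕ}
    (hdeg : ∀ v, H.degree v ≤ d) (hd : 0 < d) {δ a : ℝ} (hδ : 0 < δ) (hδa : δ ≤ a)
    (ha : a ≤ 1 / 2) (hk : 0 < k) :
    (#{f : Fin k → V | Function.Injective f ∧
        a * k * d ≤ ((H.induce (Set.range f)).edgeSet.ncard : ℝ)} : ℝ) ≤
      2 ^ k * (k ! * ((δ ^ 2)⁻¹ * rexp 1) ^ k *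
        ((Fintype.card V : ℝ) / k) ^ ((k : ℝ) - (1 - δ) * a * k)) := by
  set T : Finset (Fin k → V) := {f | Function.Injective f ∧
    a * k * d ≤ ((H.induce (Set.range f)).edgeSet.ncard : ℝ)}
  rcases T.eq_empty_or_nonempty with hT | ⟨f₀, hf₀⟩
  · rw [hT, card_empty, Nat.cast_zero]
    positivity
  have hkn : k ≤ Fintype.card V := by
    simpa using Fintype.card_le_of_injective f₀ (mem_filter.mp hf₀).2.1
  set c := ⌈a * δ * d⌉₊
  set 𝕀 : Finset (Finset (Fin k)) := {I | (1 - δ) * a * k ≤ #I}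
  have hcover : T ⊆ 𝕀.biUnion fun I => {f | ∀ i ∈ I, c ≤ H.backDegree f i (f i)} := by
    intro f hf
    obtain ⟨hinj, hdense⟩ := (mem_filter.mp hf).2
    refine mem_biUnion.2 ⟨({i | c ≤ H.backDegree f i (f i)} : Finset _),
      mem_filter.2 ⟨mem_univ _, ?_⟩, mem_filter.2 ⟨mem_univ _, fun i hi => (mem_filter.mp hi).2⟩⟩
    simpa only [Fintype.card_fin] using H.mul_card_le_card_filter_ceil_le_backDegree hdeg hd hinj
      (hδ.trans_le hδa).le hδ.le (by simpa only [Fintype.card_fin] using hdense)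
  set B := k ! * ((δ ^ 2)⁻¹ * rexp 1) ^ k *
    ((Fintype.card V : ℝ) / k) ^ ((k : ℝ) - (1 - δ) * a * k)
  calc (#T : ℝ) ≤ ∑ I ∈ 𝕀, (#{f : Fin k → V | ∀ i ∈ I, c ≤ H.backDegree f i (f i)} : ℝ) := by
        exact_mod_cast (card_le_card hcover).trans card_biUnion_le
    _ ≤ #𝕀 * B := by
        simpa using sum_le_card_nsmul _ _ _ fun I hI =>
          H.card_filter_forall_ceil_le_backDegree_le hdeg hd hδ hδa ha hk hkn (mem_filter.mp hI).2
    _ ≤ 2 ^ k * B := by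
        gcongr
        exact_mod_cast (card_filter_le _ _).trans_eq (by simp)

end SimpleGraph

/-- Let `H` be a graph on `n` vertices with maximum degree at most `d ≥ 1`,
and let `0 < δ ≤ a ≤ 1/2` and `k ∈ ℕ`. Then the number of `k`-element vertex subsets `S`
with `e(H[S]) ≥ a·k·d` is at most `(2e/δ²)^k · (n/k)^{k - (1-δ)·a·k}`. -/
theorem stmt16 {V : Type*} [Fintype V] {n : ℕ} (hn : Fintype.card V = n)
    (d : ℕ) (hd : 1 ≤ d) (Hg : SimpleGraph V) (hdeg : ∀ v, (Hg.neighborSet v).ncard ≤ d)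
    (δ a : ℝ) (hδ : 0 < δ) (hδa : δ ≤ a) (ha : a ≤ 1 / 2) (k : ℕ) :
    ({S : Finset V | S.card = k ∧
        a * k * d ≤ ((Hg.induce (↑S : Set V)).edgeSet.ncard : ℝ)}.ncard : ℝ) ≤
      (2 * Real.exp 1 / δ ^ 2) ^ k * ((n : ℝ) / k) ^ ((k : ℝ) - (1 - δ) * a * k) := by
  classical
  subst hn
  have hdeg' : ∀ v, Hg.degree v ≤ d := fun v => by
    rw [← Hg.card_neighborSet_eq_degree, ← Nat.card_eq_fintype_card, Nat.card_coe_set_eq]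
    exact hdeg v
  have hsets := card_mul_factorial_le_card_injective k
    fun s : Set V => a * k * d ≤ ((Hg.induce s).edgeSet.ncard : ℝ)
  rw [← coe_filter_univ, Set.ncard_coe_finset]
  rcases Nat.eq_zero_or_pos k with rfl | hk
  · have hT := hsets.trans (card_le_univ _)
    simp only [Nat.factorial_zero, mul_one, Fintype.card_unique] at hT
    simpa using hT
  have hfac : (0 : ℝ) < k ! := by positivity
  rw [← mul_le_mul_iff_of_pos_right hfac]
  calc _ ≤ _ := by exact_mod_cast hsets
    _ ≤ _ := Hg.card_injective_dense_tuples_le hdeg' hd hδ hδa ha hk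
    _ = _ := by ring
end

section
/- Let {B_i}_{i∈I} be a finite family of subsets of a finite set X, let p ∈ [0,1], and let X_p be the p-random subset of X (each element included independently with probability p). Then P(B_i ⊄ X_p for all i ∈ I) ≥ Π_{i∈I} P(B_i ⊄ X_p). -/
/-!
The product Bernoulli measure on `X → Bool` is log-modular on points,
`μ {a} * μ {b} = μ {a ⊓ b} * μ {a ⊔ b}`, coordinate by coordinate. Hence the FKG inequality
applies, and any two lower sets of the lattice `X → Bool` are positively correlated. Each event
`B ⊄ X_p` is a lower set, and so are intersections of them; inducting over the family gives the
product bound.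
-/

open MeasureTheory
open scoped ENNReal NNReal

theorem Antitone.fkg {α β : Type*} [DistribLattice α] [Fintype α] [CommSemiring β] [LinearOrder β]
    [IsStrictOrderedRing β] [ExistsAddOfLE β] {μ f g : α → β}
    (hμ₀ : 0 ≤ μ) (hf₀ : 0 ≤ f) (hg₀ : 0 ≤ g) (hf : Antitone f) (hg : Antitone g)
    (hμ : ∀ a b, μ a * μ b ≤ μ (a ⊓ b) * μ (a ⊔ b)) :
    (∑ a, μ a * f a) * ∑ a, μ a * g a ≤ (∑ a, μ a) * ∑ a, μ a * (f a * g a) :=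
  _root_.fkg (α := αᵒᵈ) (f ∘ OrderDual.ofDual) (g ∘ OrderDual.ofDual) (μ ∘ OrderDual.ofDual)
    hμ₀ hf₀ hg₀ hf.dual_left hg.dual_left fun a b => (hμ a b).trans_eq (mul_comm _ _)

theorem IsLowerSet.antitone_indicator_one {α M : Type*} [Preorder α] [Zero M] [One M] [Preorder M]
    [ZeroLEOneClass M] {s : Set α} (hs : IsLowerSet s) : Antitone (s.indicator (1 : α → M)) := by
  intro a b hab
  by_cases hb : b ∈ s
  · simp [hb, hs hab hb]
  · rw [Set.indicator_of_notMem hb]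
    exact Set.indicator_nonneg (fun _ _ => zero_le_one) a

-- Point masses are taken in `ℝ≥0`: `fkg` needs a strictly ordered semiring, which `ℝ≥0∞` is not.
theorem measure_eq_sum_toNNReal_mul_indicator {α : Type*} [Fintype α] [MeasurableSpace α]
    [MeasurableSingletonClass α] (μ : Measure α) [IsFiniteMeasure μ] (S : Set α) :
    μ S = ↑(∑ a, (μ {a}).toNNReal * S.indicator 1 a) := by
  classical
  rw [← Set.coe_toFinset S, ← sum_measure_singleton,
    ← Finset.sum_indicator_subset _ (Finset.subset_univ _)]
  push_cast
  refine Finset.sum_congr rfl fun a _ => ?_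
  by_cases h : a ∈ S <;> simp [h]

theorem IsLowerSet.measure_mul_measure_le {α : Type*} [Finite α] [DistribLattice α]
    [MeasurableSpace α] [MeasurableSingletonClass α] (μ : Measure α) [IsFiniteMeasure μ]
    (hμ : ∀ a b, μ {a} * μ {b} ≤ μ {a ⊓ b} * μ {a ⊔ b}) {A C : Set α}
    (hA : IsLowerSet A) (hC : IsLowerSet C) :
    μ A * μ C ≤ μ Set.univ * μ (A ∩ C) := by
  have := Fintype.ofFinite α
  have hw : ∀ a b, (μ {a}).toNNReal * (μ {b}).toNNReal
      ≤ (μ {a ⊓ b}).toNNReal * (μ {a ⊔ b}).toNNReal := fun a b => by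
    simpa only [ENNReal.toNNReal_mul] using
      ENNReal.toNNReal_mono (ENNReal.mul_ne_top (measure_ne_top _ _) (measure_ne_top _ _)) (hμ a b)
  have key := Antitone.fkg (fun _ => zero_le) (fun _ => zero_le) (fun _ => zero_le)
    hA.antitone_indicator_one hC.antitone_indicator_one hw
  rw [measure_eq_sum_toNNReal_mul_indicator μ A, measure_eq_sum_toNNReal_mul_indicator μ C,
    measure_eq_sum_toNNReal_mul_indicator μ Set.univ, measure_eq_sum_toNNReal_mul_indicator μ (A ∩ C)]
  simp only [Set.indicator_univ, Set.inter_indicator_one, Pi.one_apply, Pi.mul_apply, mul_one]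
  exact_mod_cast key

theorem IsLowerSet.prod_measure_le_measure_biInter {α ι : Type*} [Finite α] [DistribLattice α]
    [MeasurableSpace α] [MeasurableSingletonClass α] (μ : Measure α) [IsProbabilityMeasure μ]
    (hμ : ∀ a b, μ {a} * μ {b} ≤ μ {a ⊓ b} * μ {a ⊔ b}) {A : ι → Set α}
    (hA : ∀ i, IsLowerSet (A i)) (s : Finset ι) :
    ∏ i ∈ s, μ (A i) ≤ μ (⋂ i ∈ s, A i) := by
  classical
  induction s using Finset.induction_on with
  | empty => simp
  | insert j s hj ih =>
    rw [Finset.prod_insert hj, Finset.set_biInter_insert]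
    calc μ (A j) * ∏ i ∈ s, μ (A i)
        ≤ μ (A j) * μ (⋂ i ∈ s, A i) := mul_le_mul_right ih _
      _ ≤ μ Set.univ * μ (A j ∩ ⋂ i ∈ s, A i) :=
        (hA j).measure_mul_measure_le μ hμ (isLowerSet_iInter₂ fun i _ => hA i)
      _ = μ (A j ∩ ⋂ i ∈ s, A i) := by rw [measure_univ, one_mul]

theorem IsLowerSet.prod_measure_le_measure_iInter {α ι : Type*} [Finite α] [DistribLattice α]
    [MeasurableSpace α] [MeasurableSingletonClass α] [Fintype ι] (μ : Measure α)
    [IsProbabilityMeasure μ] (hμ : ∀ a b, μ {a} * μ {b} ≤ μ {a ⊓ b} * μ {a ⊔ b})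
    {A : ι → Set α} (hA : ∀ i, IsLowerSet (A i)) :
    ∏ i, μ (A i) ≤ μ (⋂ i, A i) := by
  simpa using IsLowerSet.prod_measure_le_measure_biInter μ hμ hA Finset.univ

theorem MeasureTheory.Measure.pi_singleton_mul_pi_singleton {ι : Type*} [Fintype ι]
    {α : ι → Type*} [∀ i, LinearOrder (α i)] [∀ i, MeasurableSpace (α i)]
    (ν : ∀ i, Measure (α i)) [∀ i, SigmaFinite (ν i)] (a b : ∀ i, α i) :
    Measure.pi ν {a} * Measure.pi ν {b} = Measure.pi ν {a ⊓ b} * Measure.pi ν {a ⊔ b} := by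
  simp only [Measure.pi_singleton, ← Finset.prod_mul_distrib]
  refine Finset.prod_congr rfl fun i _ => ?_
  rcases le_total (a i) (b i) with h | h
  · simp [h]
  · simp [h, mul_comm]

theorem isLowerSet_setOf_not_subset {X : Type*} (B : Set X) :
    IsLowerSet {ω : X → Bool | ¬ B ⊆ {x | ω x = true}} := by
  intro a b hba ha hb
  exact ha fun x hx => Bool.eq_true_of_true_le (hb hx ▸ hba x)

/-- FKG/Harris inequality for the decreasing events `{B_i ⊄ X_p}`: if
`X_p` is the `p`-random subset of a finite set `X` (modelled as a random function
`X → Bool` with independent `Bernoulli(p)` coordinates), then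
`P(B_i ⊄ X_p for all i) ≥ Π_i P(B_i ⊄ X_p)`. -/
theorem stmt19 {X : Type*} [Fintype X] {I : Type*} [Fintype I]
    (B : I → Set X) (p : ℝ≥0∞) (hp : p ≤ 1) :
    ∏ i : I, (Measure.pi fun _ : X => (PMF.bernoulli p.toNNReal (by simpa using ENNReal.toNNReal_mono ENNReal.one_ne_top hp)).toMeasure)
        {ω : X → Bool | ¬ B i ⊆ {x | ω x = true}} ≤
      (Measure.pi fun _ : X => (PMF.bernoulli p.toNNReal (by simpa using ENNReal.toNNReal_mono ENNReal.one_ne_top hp)).toMeasure)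
        (⋂ i : I, {ω : X → Bool | ¬ B i ⊆ {x | ω x = true}}) :=
  IsLowerSet.prod_measure_le_measure_iInter _
    (fun a b => (Measure.pi_singleton_mul_pi_singleton _ a b).le)
    fun i => isLowerSet_setOf_not_subset (B i)
end
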